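/- For every connected graph G of order n ≥ 3, Γ_t(G) ≤ d_0(G) ≤ n; moreover d_0(G) = Γ_t(G) if and only if G has exactly one minimal total dominating set. -/
import Mathlib


open Finset

variable {V : Type*} [Fintype V] [DecidableEq V]

def IsTDS (G : SimpleGraph V) (S : Finset V) : Prop :=
  ∀ v : V, ∃ s ∈ S, G.Adj v s

def IsMTDS (G : SimpleGraph V) (S : Finset V) : Prop :=
  IsTDS G S ∧ ∀ T : Finset V, T ⊂ S → ¬ IsTDS G T

/-- The `k`-total dominating graph: vertices are total dominating sets of size at most `k`,
adjacent iff they differ by adding or deleting one vertex. -/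
def TDGraph (G : SimpleGraph V) (k : ℕ) :
    SimpleGraph {S : Finset V // IsTDS G S ∧ S.card ≤ k} :=
  SimpleGraph.fromRel (fun A B => A.1 ⊆ B.1 ∧ B.1.card = A.1.card + 1)

/-- The upper total domination number. -/
noncomputable def GammaT (G : SimpleGraph V) : ℕ :=
  sSup {k | ∃ S : Finset V, IsMTDS G S ∧ S.card = k}

/-- `d₀ G` is the least `ℓ` such that `TDGraph G k` is connected for all `k ≥ ℓ`. -/
noncomputable def d0 (G : SimpleGraph V) : ℕ :=
  sInf {ℓ | ∀ k, ℓ ≤ k → (TDGraph G k).Connected}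

/- ### Auxiliary lemmas -/

lemma tds_mono {G : SimpleGraph V} {S T : Finset V} (h : IsTDS G S) (hST : S ⊆ T) :
    IsTDS G T := fun v => by
  obtain ⟨s, hs, hadj⟩ := h v
  exact ⟨s, hST hs, hadj⟩

lemma tds_univ (G : SimpleGraph V) (hG : G.Connected) (hn : 2 ≤ Fintype.card V) :
    IsTDS G (univ : Finset V) := by
  intro v
  obtain ⟨w, hw⟩ := Fintype.exists_ne_of_one_lt_card (by omega) v
  obtain ⟨p⟩ := hG.preconnected v w
  cases p with
  | nil => exact absurd rfl hw
  | cons h q => exact ⟨_, Finset.mem_univ _, h⟩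

lemma exists_mtds_subset (G : SimpleGraph V) :
    ∀ S : Finset V, IsTDS G S → ∃ T, T ⊆ S ∧ IsMTDS G T := by
  intro S
  induction S using Finset.strongInductionOn with
  | _ S ih =>
    intro hS
    by_cases h : ∀ T, T ⊂ S → ¬ IsTDS G T
    · exact ⟨S, Finset.Subset.refl S, hS, h⟩
    · push_neg at h
      obtain ⟨T, hTS, hT⟩ := h
      obtain ⟨U, hUT, hU⟩ := ih T hTS hT
      exact ⟨U, hUT.trans hTS.subset, hU⟩

lemma tdgraph_adj {G : SimpleGraph V} {k : ℕ}
    {A B : {S : Finset V // IsTDS G S ∧ S.card ≤ k}} :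
    (TDGraph G k).Adj A B ↔ A ≠ B ∧
      ((A.1 ⊆ B.1 ∧ B.1.card = A.1.card + 1) ∨ (B.1 ⊆ A.1 ∧ A.1.card = B.1.card + 1)) := by
  simp [TDGraph, SimpleGraph.fromRel_adj]

/-- Any vertex of `TDGraph G k` is reachable to `univ` when `k ≥ |V|`. -/
lemma reach_univ (G : SimpleGraph V) (hu : IsTDS G (univ : Finset V)) {k : ℕ}
    (hk : Fintype.card V ≤ k) (A : {S : Finset V // IsTDS G S ∧ S.card ≤ k}) :
    (TDGraph G k).Reachable A ⟨univ, hu, by simpa using hk⟩ := by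
  suffices h : ∀ m : ℕ, ∀ A : {S : Finset V // IsTDS G S ∧ S.card ≤ k},
      Fintype.card V - A.1.card ≤ m →
      (TDGraph G k).Reachable A ⟨univ, hu, by simpa using hk⟩ from h _ A le_rfl
  intro m
  induction m with
  | zero =>
    intro A hA
    have hle : A.1.card ≤ Fintype.card V := Finset.card_le_univ _
    have : A.1.card = Fintype.card V := by omega
    have : A.1 = univ := Finset.eq_univ_of_card _ this
    rw [show A = (⟨univ, hu, by simpa using hk⟩ :
      {S : Finset V // IsTDS G S ∧ S.card ≤ k}) from Subtype.ext this]
  | succ m ih =>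
    intro A hA
    by_cases hAu : A.1 = univ
    · rw [show A = (⟨univ, hu, by simpa using hk⟩ :
        {S : Finset V // IsTDS G S ∧ S.card ≤ k}) from Subtype.ext hAu]
    · have : ¬ (univ : Finset V) ⊆ A.1 := fun h =>
        hAu (Finset.univ_subset_iff.mp h)
      obtain ⟨v, -, hv⟩ := Finset.not_subset.mp this
      set B : Finset V := insert v A.1 with hB
      have hBcard : B.card = A.1.card + 1 := Finset.card_insert_of_notMem hv
      have hBtds : IsTDS G B := tds_mono A.2.1 (Finset.subset_insert _ _)
      have hBk : B.card ≤ k := le_trans (Finset.card_le_univ _) (by simpa using hk)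
      have hadj : (TDGraph G k).Adj A ⟨B, hBtds, hBk⟩ := by
        rw [tdgraph_adj]
        refine ⟨fun h => ?_, Or.inl ⟨Finset.subset_insert _ _, hBcard⟩⟩
        · have := congrArg (fun x => (Subtype.val x : Finset V).card) h
          simp only at this
          omega
      have hAcard : A.1.card < Fintype.card V := by
        have h1 : A.1.card ≤ Fintype.card V := Finset.card_le_univ _
        rcases lt_or_eq_of_le h1 with h | h
        · exact h
        · exact absurd (Finset.eq_univ_of_card _ h) hAu
      exact hadj.reachable.trans (ih ⟨B, hBtds, hBk⟩
        (show Fintype.card V - B.card ≤ m by omega))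

/-- If `S` is the unique minimal TDS, then any vertex of `TDGraph G k` is reachable to `S`. -/
lemma reach_down {G : SimpleGraph V} {S : Finset V} (hS : IsMTDS G S)
    (huniq : ∀ T : Finset V, IsMTDS G T → T = S) {k : ℕ} (hSk : S.card ≤ k)
    (A : {S : Finset V // IsTDS G S ∧ S.card ≤ k}) :
    (TDGraph G k).Reachable A ⟨S, hS.1, hSk⟩ := by
  suffices h : ∀ m : ℕ, ∀ A : {S : Finset V // IsTDS G S ∧ S.card ≤ k},
      A.1.card ≤ m → (TDGraph G k).Reachable A ⟨S, hS.1, hSk⟩ from h _ A le_rfl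
  intro m
  induction m with
  | zero =>
    intro A hA
    obtain ⟨T, hTA, hT⟩ := exists_mtds_subset G A.1 A.2.1
    have hTS := huniq T hT
    subst hTS
    have : A.1 = T := (Finset.eq_of_subset_of_card_le hTA
      (Nat.le_trans hA (Nat.zero_le _))).symm
    rw [show A = (⟨T, hS.1, hSk⟩ : {S : Finset V // IsTDS G S ∧ S.card ≤ k}) from
      Subtype.ext this]
  | succ m ih =>
    intro A hA
    obtain ⟨T, hTA, hT⟩ := exists_mtds_subset G A.1 A.2.1
    have hTS := huniq T hT
    subst hTS
    by_cases hAS : A.1 = T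
    · rw [show A = (⟨T, hS.1, hSk⟩ : {S : Finset V // IsTDS G S ∧ S.card ≤ k}) from
        Subtype.ext hAS]
    · have hss : T ⊂ A.1 := hTA.ssubset_of_ne (fun h => hAS h.symm)
      obtain ⟨v, hvA, hvT⟩ := Finset.exists_of_ssubset hss
      set B : Finset V := A.1.erase v with hB
      have hTB : T ⊆ B := fun x hx =>
        Finset.mem_erase.mpr ⟨fun h => hvT (h ▸ hx), hTA hx⟩
      have hBtds : IsTDS G B := tds_mono hS.1 hTB
      have hBcard : B.card + 1 = A.1.card := by
        rw [hB, Finset.card_erase_of_mem hvA]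
        have : 0 < A.1.card := Finset.card_pos.mpr ⟨v, hvA⟩
        omega
      have hBk : B.card ≤ k := le_trans (by omega) A.2.2
      have hadj : (TDGraph G k).Adj A ⟨B, hBtds, hBk⟩ := by
        rw [tdgraph_adj]
        refine ⟨fun h => ?_, Or.inr ⟨Finset.erase_subset _ _, hBcard.symm⟩⟩
        · have := congrArg (fun x => (Subtype.val x : Finset V).card) h
          simp only at this
          omega
      exact hadj.reachable.trans (ih ⟨B, hBtds, hBk⟩ (show B.card ≤ m by omega))

/-- A minimal TDS `S` is an isolated vertex of `TDGraph G S.card`. -/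
lemma mtds_isolated {G : SimpleGraph V} {S : Finset V} (hS : IsMTDS G S)
    (B : {T : Finset V // IsTDS G T ∧ T.card ≤ S.card}) :
    ¬ (TDGraph G S.card).Adj ⟨S, hS.1, le_rfl⟩ B := by
  rw [tdgraph_adj]
  rintro ⟨hne, h | h⟩
  · have := B.2.2
    simp only at h
    omega
  · simp only at h
    refine hS.2 B.1 ?_ B.2.1
    exact h.1.ssubset_of_ne (fun heq => by
      apply hne; exact Subtype.ext heq.symm)

lemma reach_eq_of_isolated {α : Type*} {H : SimpleGraph α} {x y : α}
    (hx : ∀ z, ¬ H.Adj x z) (h : H.Reachable x y) : x = y := by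
  obtain ⟨w⟩ := h
  cases w with
  | nil => rfl
  | cons h' p => exact absurd h' (hx _)

theorem stmt_12 (G : SimpleGraph V) (hG : G.Connected) (hn : 3 ≤ Fintype.card V) :
    GammaT G ≤ d0 G ∧ d0 G ≤ Fintype.card V ∧
      (d0 G = GammaT G ↔ ∃! S : Finset V, IsMTDS G S) := by
  have hV : Nonempty V := Fintype.card_pos_iff.mp (by omega)
  have hu : IsTDS G univ := tds_univ G hG (by omega)
  -- facts about GammaT
  have hMne : {k | ∃ S : Finset V, IsMTDS G S ∧ S.card = k}.Nonempty := by
    obtain ⟨T, -, hT⟩ := exists_mtds_subset G univ hu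
    exact ⟨T.card, T, hT, rfl⟩
  have hMbdd : BddAbove {k | ∃ S : Finset V, IsMTDS G S ∧ S.card = k} := by
    refine ⟨Fintype.card V, fun k hk => ?_⟩
    obtain ⟨S, -, hS⟩ := hk
    exact hS ▸ Finset.card_le_univ S
  obtain ⟨Smax, hSmax, hSmaxcard⟩ := Nat.sSup_mem hMne hMbdd
  have hSmaxcard : Smax.card = GammaT G := hSmaxcard
  have hle : ∀ T : Finset V, IsMTDS G T → T.card ≤ GammaT G :=
    fun T hT => le_csSup hMbdd ⟨T, hT, rfl⟩
  have hSmaxpos : 0 < Smax.card := by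
    obtain ⟨s, hs, -⟩ := hSmax.1 (Classical.arbitrary V)
    exact Finset.card_pos.mpr ⟨s, hs⟩
  -- facts about d0
  have hnD : Fintype.card V ∈ {ℓ | ∀ k, ℓ ≤ k → (TDGraph G k).Connected} := by
    intro k hk
    rw [SimpleGraph.connected_iff]
    refine ⟨fun x y => (reach_univ G hu hk x).trans (reach_univ G hu hk y).symm,
      ⟨⟨univ, hu, by simpa using hk⟩⟩⟩
  have hd0n : d0 G ≤ Fintype.card V := Nat.sInf_le hnD
  have hd0D : d0 G ∈ {ℓ | ∀ k, ℓ ≤ k → (TDGraph G k).Connected} :=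
    Nat.sInf_mem ⟨_, hnD⟩
  -- key: if there are two distinct minimal TDSs and TDGraph G (GammaT G) is connected, contra
  have hkey : ∀ T : Finset V, IsMTDS G T → T ≠ Smax →
      ¬ (TDGraph G Smax.card).Connected := by
    intro T hT hTne hconn
    have hTc : T.card ≤ Smax.card := hSmaxcard ▸ hle T hT
    have hreach := hconn.preconnected ⟨Smax, hSmax.1, le_rfl⟩ ⟨T, hT.1, hTc⟩
    have := reach_eq_of_isolated (mtds_isolated hSmax) hreach
    exact hTne (congrArg Subtype.val this).symm
  -- Γ ≤ d0
  have hgd : GammaT G ≤ d0 G := by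
    by_contra h
    push_neg at h
    by_cases huniq : ∀ T : Finset V, IsMTDS G T → T = Smax
    · -- unique minimal TDS: TDGraph G (Smax.card - 1) is connected hence nonempty, contra
      have hconn := hd0D (Smax.card - 1) (by omega)
      obtain ⟨⟨T, hT, hTc⟩⟩ := hconn.nonempty
      obtain ⟨S', hS'T, hS'⟩ := exists_mtds_subset G T hT
      have := huniq S' hS'
      subst this
      have := Finset.card_le_card hS'T
      omega
    · push_neg at huniq
      obtain ⟨T, hT, hTne⟩ := huniq
      exact hkey T hT hTne (hd0D Smax.card (by omega))
  refine ⟨hgd, hd0n, ?_, ?_⟩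
  · -- d0 = Γ → unique minimal TDS
    intro hd
    refine ⟨Smax, hSmax, fun T hT => ?_⟩
    by_contra hTne
    exact hkey T hT hTne (hd0D Smax.card (by omega))
  · -- unique minimal TDS → d0 = Γ
    rintro ⟨S, hS, huniq⟩
    have hSSmax : Smax = S := huniq Smax hSmax
    subst hSSmax
    have huniq' : ∀ T : Finset V, IsMTDS G T → T = Smax := huniq
    have hGam : GammaT G = Smax.card := hSmaxcard.symm
    refine le_antisymm ?_ hgd
    refine Nat.sInf_le ?_
    intro k hk
    rw [hGam] at hk
    rw [SimpleGraph.connected_iff]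
    exact ⟨fun x y => (reach_down hSmax huniq' hk x).trans
      (reach_down hSmax huniq' hk y).symm, ⟨⟨Smax, hSmax.1, hk⟩⟩⟩
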